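/- arXiv:0804.0889 — 2 statements merged into one kernel-verified Lean document; each statement's English description precedes it below -/
import Mathlib

section
/- Let M ≥ N ≥ 1 be integers. Then for every x > 0, ( Σ_{k=0}^{N−1} ( ∏_{i=1}^{k} (2i−1)/(2i+2(M−N)) ) · L_{2k}^{(2(M−N))}(2Mx) ) · x^{M−N+1/2} e^{−Mx} = −((2N−1)/2) · ( ∏_{j=1}^{N−1} (2j−1)/(2j+2(M−N)) ) · ∫_x^∞ t^{M−N−1/2} e^{−Mt} · L_{2N−1}^{(2(M−N))}(2Mt) dt, the integral being absolutely convergent. -/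
open MeasureTheory

/-- The generalized Laguerre polynomial
`L_n^(α)(x) = ∑_{k=0}^{n} (-1)^k (n+α choose n-k) x^k / k!`. -/
noncomputable def genLaguerre (n α : ℕ) (x : ℝ) : ℝ :=
  ∑ k ∈ Finset.range (n + 1),
    (-1 : ℝ) ^ k * ((n + α).choose (n - k) : ℝ) * x ^ k / (k.factorial : ℝ)

/-- The skew inner product
`⟨f, g⟩₄ = ∫_0^∞ (f(x) g'(x) - f'(x) g(x)) x^(2(M-N)+1) e^(-2Mx) dx`. -/
noncomputable def skewInner (M N : ℕ) (f g : ℝ → ℝ) : ℝ :=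
  ∫ x in Set.Ioi (0 : ℝ),
    (f x * deriv g x - deriv f x * g x) * x ^ (2 * (M - N) + 1) *
      Real.exp (-(2 * (M : ℝ)) * x)

/-! With `y = 2Mt` and `α = 2(M - N)`, the left-hand side is
`ψ(t) = S(y) t^((α+1)/2) e^(-Mt)` for the polynomial `S = ∑_{k<N} c_k L_{2k}`, and
`ψ'(t) = ½ t^((α-1)/2) e^(-Mt) ((α + 1 - y) S(y) + 2y S'(y))`.
The identities `x L'_{n+1} = (n+1) L_{n+1} - (n+1+α) L_n` and `L'_{n+1} = L'_n - L_n` turn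
`(α + 1 - y) L_{2k} + 2y L'_{2k}` into a difference of consecutive odd Laguerre polynomials, and the
weights `c_k` are chosen so that the bracket telescopes to `(2N - 1) c_{N-1} L_{2N-1}(y)`.
As `ψ` decays at infinity, the identity is the fundamental theorem of calculus on `(x, ∞)`. -/

open Polynomial Finset Real Filter Topology Set

noncomputable def laguerre (n α : ℕ) : ℝ[X] :=
  ∑ k ∈ range (n + 1), C ((-1) ^ k * ((n + α).choose (n - k) : ℝ) / k.factorial) * X ^ k

theorem genLaguerre_eq_eval (n α : ℕ) (y : ℝ) : genLaguerre n α y = (laguerre n α).eval y := by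
  simp only [genLaguerre, laguerre, eval_finsetSum, eval_mul, eval_C, eval_pow, eval_X]
  exact sum_congr rfl fun k _ => by ring

theorem coeff_laguerre (n α j : ℕ) :
    (laguerre n α).coeff j = (-1) ^ j * ((n + α).choose (α + j) : ℝ) / j.factorial := by
  simp only [laguerre, finsetSum_coeff, coeff_C_mul_X_pow]
  rw [sum_ite_eq (range (n + 1)) j]
  split_ifs with hj <;> rw [Finset.mem_range] at hj
  · rw [Nat.choose_symm_of_eq_add (by omega : n + α = (n - j) + (α + j))]
  · rw [Nat.choose_eq_zero_of_lt (by omega : n + α < α + j)]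
    simp

theorem derivative_laguerre_succ (n α : ℕ) :
    derivative (laguerre (n + 1) α) = derivative (laguerre n α) - laguerre n α := by
  ext j
  simp only [coeff_derivative, coeff_sub, coeff_laguerre, Nat.factorial_succ,
    show n + 1 + α = n + α + 1 by ring, show α + (j + 1) = α + j + 1 by ring,
    Nat.choose_succ_succ']
  push_cast
  field_simp
  ring

theorem Nat.succ_mul_choose_add_mul_succ_choose (N K : ℕ) :
    (N + 1) * N.choose K + K * (N + 1).choose K = (N + 1) * (N + 1).choose K := by
  rcases le_or_gt K (N + 1) with hK | hK
  · have h := Nat.choose_mul_succ_eq N K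
    zify [hK] at h ⊢
    linear_combination h
  · simp [Nat.choose_eq_zero_of_lt hK, Nat.choose_eq_zero_of_lt (by omega : N < K)]

theorem X_mul_derivative_laguerre_succ (n α : ℕ) :
    X * derivative (laguerre (n + 1) α) =
      C ((n : ℝ) + 1) * laguerre (n + 1) α - C ((n : ℝ) + 1 + α) * laguerre n α := by
  have hchoose (j : ℕ) :
      (j : ℝ) * ((n + 1 + α).choose (α + j) : ℝ) + (n + 1 + α) * (n + α).choose (α + j) =
        (n + 1) * (n + 1 + α).choose (α + j) := by
    have h := Nat.succ_mul_choose_add_mul_succ_choose (n + α) (α + j)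
    rw [show n + α + 1 = n + 1 + α by ring] at h
    have := congrArg (Nat.cast (R := ℝ)) h
    push_cast at this
    linear_combination this
  ext j
  rcases j with _ | i
  · simp only [coeff_X_mul_zero, coeff_sub, coeff_C_mul, coeff_laguerre]
    have := hchoose 0
    simp only [CharP.cast_eq_zero, add_zero, zero_mul, zero_add, pow_zero, one_mul,
      Nat.factorial_zero, Nat.cast_one, div_one] at this ⊢
    linear_combination this
  · simp only [coeff_X_mul, coeff_derivative, coeff_sub, coeff_C_mul, coeff_laguerre]
    have := hchoose (i + 1)
    rw [Nat.factorial_succ, pow_succ]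
    push_cast at this ⊢
    field_simp
    linear_combination -this

theorem laguerre_zero (α : ℕ) : laguerre 0 α = 1 := by
  simp [laguerre]

theorem eval_laguerre_one (α : ℕ) (y : ℝ) : (laguerre 1 α).eval y = α + 1 - y := by
  simp [laguerre, sum_range_succ, add_comm, sub_eq_add_neg]

theorem laguerre_ladder (p α : ℕ) (y : ℝ) :
    (α + 1 - y) * (laguerre (p + 1) α).eval y + 2 * y * (derivative (laguerre (p + 1) α)).eval y =
      (p + 2) * (laguerre (p + 2) α).eval y - (p + 1 + α) * (laguerre p α).eval y := by
  have h₁ := congrArg (eval y) (X_mul_derivative_laguerre_succ p α)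
  have h₂ := congrArg (eval y) (X_mul_derivative_laguerre_succ (p + 1) α)
  have h₃ := congrArg (eval y) (derivative_laguerre_succ (p + 1) α)
  simp only [eval_mul, eval_sub, eval_X, eval_C] at h₁ h₂ h₃
  push_cast at h₂
  linear_combination h₁ + h₂ - y * h₃

noncomputable def skewCoeff (α k : ℕ) : ℝ :=
  ∏ i ∈ Icc 1 k, (2 * (i : ℝ) - 1) / (2 * i + α)

theorem skewCoeff_succ_mul (α k : ℕ) :
    skewCoeff α (k + 1) * (2 * k + 2 + α) = (2 * k + 1) * skewCoeff α k := by
  rw [skewCoeff, prod_Icc_succ_top (by omega), ← skewCoeff]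
  push_cast
  field_simp
  ring

noncomputable def evenLaguerreSum (α N : ℕ) : ℝ[X] :=
  ∑ k ∈ range N, C (skewCoeff α k) * laguerre (2 * k) α

theorem eval_evenLaguerreSum (α N : ℕ) (y : ℝ) :
    (evenLaguerreSum α N).eval y = ∑ k ∈ range N, skewCoeff α k * (laguerre (2 * k) α).eval y := by
  simp only [evenLaguerreSum, eval_finsetSum, eval_mul, eval_C]

theorem evenLaguerreSum_ode (α n : ℕ) (y : ℝ) :
    (α + 1 - y) * (evenLaguerreSum α (n + 1)).eval y +
        2 * y * (derivative (evenLaguerreSum α (n + 1))).eval y =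
      (2 * n + 1) * skewCoeff α n * (laguerre (2 * n + 1) α).eval y := by
  induction n with
  | zero => simp [evenLaguerreSum, skewCoeff, laguerre_zero, eval_laguerre_one]
  | succ n ih =>
    have hstep := laguerre_ladder (2 * n + 1) α y
    rw [show 2 * n + 1 + 1 = 2 * (n + 1) by ring, show 2 * n + 1 + 2 = 2 * (n + 1) + 1 by ring]
      at hstep
    rw [evenLaguerreSum, sum_range_succ, ← evenLaguerreSum]
    simp only [derivative_add, derivative_C_mul, eval_add, eval_mul, eval_C]
    push_cast at hstep ⊢
    linear_combination ih + skewCoeff α (n + 1) * hstep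
      - (laguerre (2 * n + 1) α).eval y * skewCoeff_succ_mul α n

theorem tendsto_eval_mul_rpow_mul_exp_neg_atTop (Q : ℝ[X]) (s : ℝ) {b : ℝ} (hb : 0 < b) :
    Tendsto (fun t => Q.eval t * t ^ s * exp (-b * t)) atTop (𝓝 0) := by
  induction Q using Polynomial.induction_on' with
  | add p q hp hq => simpa [add_mul] using hp.add hq
  | monomial n a =>
    have h := (tendsto_rpow_mul_exp_neg_mul_atTop_nhds_zero (n + s) b hb).const_mul a
    rw [mul_zero] at h
    refine h.congr' ?_
    filter_upwards [eventually_gt_atTop 0] with t ht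
    rw [eval_monomial, rpow_add ht, rpow_natCast]
    ring

theorem tendsto_eval_const_mul_mul_rpow_mul_exp_neg_atTop (S : ℝ[X]) (s β : ℝ) {b : ℝ}
    (hb : 0 < b) : Tendsto (fun t => S.eval (β * t) * t ^ s * exp (-b * t)) atTop (𝓝 0) := by
  have h := tendsto_eval_mul_rpow_mul_exp_neg_atTop (S.comp (C β * X)) s hb
  simp only [eval_comp, Polynomial.eval_mul, Polynomial.eval_C, Polynomial.eval_X] at h
  exact h

theorem integrableOn_rpow_mul_exp_mul_eval (P : ℝ[X]) (s β : ℝ) {b x : ℝ} (hb : 0 < b)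
    (hx : 0 < x) : IntegrableOn (fun t => t ^ s * exp (-b * t) * P.eval (β * t)) (Ioi x) := by
  have hcont : ContinuousOn (fun t => t ^ s * exp (-b * t) * P.eval (β * t)) (Ici x) := by
    intro t ht
    have ht0 : t ≠ 0 := (hx.trans_le ht).ne'
    fun_prop (disch := exact Or.inl ht0)
  have hdecay : (fun t => t ^ s * exp (-b * t) * P.eval (β * t)) =o[atTop]
      fun t => exp (-(b / 2) * t) := by
    rw [Asymptotics.isLittleO_iff_tendsto fun t h => absurd h (exp_ne_zero _)]
    refine (tendsto_eval_const_mul_mul_rpow_mul_exp_neg_atTop P s β (half_pos hb)).congr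
      fun t => ?_
    rw [eq_div_iff (exp_ne_zero _), mul_assoc, ← exp_add]
    ring_nf
  exact integrable_of_isBigO_exp_neg (half_pos hb) hcont hdecay.isBigO

theorem hasDerivAt_eval_mul_rpow_mul_exp (S : ℝ[X]) (a b β : ℝ) {t : ℝ} (ht : 0 < t) :
    HasDerivAt (fun t => S.eval (β * t) * t ^ a * exp (-b * t))
      (t ^ (a - 1) * exp (-b * t) *
        ((a - b * t) * S.eval (β * t) + β * t * (derivative S).eval (β * t))) t := by
  have hS : HasDerivAt (fun t => S.eval (β * t)) ((derivative S).eval (β * t) * β) t := by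
    have hlin : HasDerivAt (fun t => β * t) β t := by simpa using (hasDerivAt_id t).const_mul β
    exact (S.hasDerivAt (β * t)).comp t hlin
  have hexp : HasDerivAt (fun t => exp (-b * t)) (exp (-b * t) * -b) t := by
    simpa using ((hasDerivAt_id t).const_mul (-b)).exp
  refine ((hS.fun_mul (hasDerivAt_rpow_const (p := a) (Or.inl ht.ne'))).fun_mul hexp).congr_deriv ?_
  rw [show t ^ a = t ^ (a - 1) * t by rw [← rpow_add_one ht.ne']; ring_nf]
  ring

theorem eval_evenLaguerreSum_mul_rpow_mul_exp_eq_integral (α n : ℕ) {b x : ℝ} (hb : 0 < b)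
    (hx : 0 < x) :
    (evenLaguerreSum α (n + 1)).eval (2 * b * x) * x ^ (((α : ℝ) + 1) / 2) * exp (-b * x) =
      -((2 * n + 1) / 2 * skewCoeff α n) *
        ∫ t in Ioi x, t ^ (((α : ℝ) - 1) / 2) * exp (-b * t) *
          (laguerre (2 * n + 1) α).eval (2 * b * t) := by
  have hderiv : ∀ t ∈ Ici x, HasDerivAt
      (fun t => (evenLaguerreSum α (n + 1)).eval (2 * b * t) * t ^ (((α : ℝ) + 1) / 2) *
        exp (-b * t))
      ((2 * n + 1) / 2 * skewCoeff α n * (t ^ (((α : ℝ) - 1) / 2) * exp (-b * t) *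
        (laguerre (2 * n + 1) α).eval (2 * b * t))) t := by
    intro t ht
    refine (hasDerivAt_eval_mul_rpow_mul_exp _ _ b (2 * b) (hx.trans_le ht)).congr_deriv ?_
    rw [show ((α : ℝ) + 1) / 2 - 1 = ((α : ℝ) - 1) / 2 by ring]
    linear_combination (t ^ (((α : ℝ) - 1) / 2) * exp (-b * t) / 2) *
      evenLaguerreSum_ode α n (2 * b * t)
  have hFTC := integral_Ioi_of_hasDerivAt_of_tendsto' hderiv
    ((integrableOn_rpow_mul_exp_mul_eval _ _ (2 * b) hb hx).const_mul _)
    (tendsto_eval_const_mul_mul_rpow_mul_exp_neg_atTop _ _ _ hb)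
  rw [integral_const_mul] at hFTC
  linear_combination hFTC

/-- The integral representation of `ψ_{2N-2}`:
`(∑_{k=0}^{N-1} (∏_{i=1}^k (2i-1)/(2i+2(M-N))) L_{2k}^{(2(M-N))}(2Mx)) x^{M-N+1/2} e^{-Mx}
 = -((2N-1)/2) (∏_{j=1}^{N-1} (2j-1)/(2j+2(M-N)))
     ∫_x^∞ t^{M-N-1/2} e^{-Mt} L_{2N-1}^{(2(M-N))}(2Mt) dt`,
the integral being absolutely convergent. -/
theorem stmt_15 (M N : ℕ) (hN : 1 ≤ N) (hMN : N ≤ M) (x : ℝ) (hx : 0 < x) :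
    IntegrableOn
      (fun t : ℝ => t ^ ((M : ℝ) - (N : ℝ) - 1 / 2) * Real.exp (-(M : ℝ) * t) *
        genLaguerre (2 * N - 1) (2 * (M - N)) (2 * (M : ℝ) * t)) (Set.Ioi x) ∧
    (∑ k ∈ Finset.range N,
        (∏ i ∈ Finset.Icc 1 k,
            (2 * (i : ℝ) - 1) / (2 * (i : ℝ) + 2 * ((M : ℝ) - (N : ℝ)))) *
          genLaguerre (2 * k) (2 * (M - N)) (2 * (M : ℝ) * x)) *
        x ^ ((M : ℝ) - (N : ℝ) + 1 / 2) * Real.exp (-(M : ℝ) * x)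
      = -((2 * (N : ℝ) - 1) / 2) *
          (∏ j ∈ Finset.Icc 1 (N - 1),
              (2 * (j : ℝ) - 1) / (2 * (j : ℝ) + 2 * ((M : ℝ) - (N : ℝ)))) *
          ∫ t in Set.Ioi x, t ^ ((M : ℝ) - (N : ℝ) - 1 / 2) * Real.exp (-(M : ℝ) * t) *
            genLaguerre (2 * N - 1) (2 * (M - N)) (2 * (M : ℝ) * t) := by
  obtain ⟨n, rfl⟩ : ∃ n, N = n + 1 := ⟨N - 1, by omega⟩
  have hM : (0 : ℝ) < M := by exact_mod_cast (by omega : 0 < M)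
  have hα : ((2 * (M - (n + 1)) : ℕ) : ℝ) = 2 * ((M : ℝ) - ((n + 1 : ℕ) : ℝ)) := by
    push_cast [Nat.cast_sub hMN]
    ring
  have hc (k : ℕ) : ∏ i ∈ Icc 1 k, (2 * (i : ℝ) - 1) / (2 * i + 2 * ((M : ℝ) - ((n + 1 : ℕ) : ℝ)))
      = skewCoeff (2 * (M - (n + 1))) k := by
    rw [skewCoeff, hα]
  have hs : (M : ℝ) - ((n + 1 : ℕ) : ℝ) - 1 / 2 = ((2 * (M - (n + 1)) : ℕ) - 1) / 2 := by
    rw [hα]; ring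
  have hs' : (M : ℝ) - ((n + 1 : ℕ) : ℝ) + 1 / 2 = ((2 * (M - (n + 1)) : ℕ) + 1) / 2 := by
    rw [hα]; ring
  rw [show 2 * (n + 1) - 1 = 2 * n + 1 by omega, Nat.add_sub_cancel]
  simp only [genLaguerre_eq_eval, hc, hs, hs', ← eval_evenLaguerreSum]
  refine ⟨integrableOn_rpow_mul_exp_mul_eval _ _ _ hM hx, ?_⟩
  rw [eval_evenLaguerreSum_mul_rpow_mul_exp_eq_integral _ _ hM hx]
  push_cast
  ring
end

section
/- Let M ≥ N ≥ 1 be integers and a > −1 a real number, and define φ(x) = exp((a/(1+a))·2Mx) − (1+a)^{2(M−N)+1} · Σ_{j=0}^{2N−2} (−a)^j · L_j^{(2(M−N))}(2Mx). Then for every real polynomial p of degree at most 2N−3, ⟨p, φ⟩_4 = 0. -/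
/-!
Put `α = 2(M-N)`, `c = 2M` and `t = ac/(1+a)`. Since `∑_j (-a)^j L_j^(α)(y)` is the generating
function `(1+a)^(-α-1) e^(ay/(1+a))` of the Laguerre polynomials, for `|a| < 1` the function
`φ` is `(1+a)^(α+1)` times the tail `j ≥ 2N-1` of that series, which explains its
skew-orthogonality to low degrees. Concretely: for polynomials `p`, `q` the integrand of
`⟨p, q e^(tx)⟩₄` is a polynomial times `e^(-(c-t)x)`, so both parts of `⟨p, φ⟩₄` are finite sums
of Gamma integrals `∫ x^n e^(-bx) = n!/b^(n+1)`, and by linearity it suffices to take `p = x^m`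
with `m ≤ 2N-3`. The Laguerre moments `∑_k (-1)^k C(j+α, j-k) (m+α+k)!/k! = (-1)^j (m+α)! C(m, j)`
turn the sum over `j` into the binomial expansions of `(1+a)^m` and `(1+a)^(m+1)`, which are
complete because `m + 1 < 2N - 1`; both sides then equal
`(m+α)! (1+a)^(m+α+1) (a(m+α+1) - m) / c^(m+α+1)`.
-/

open MeasureTheory

open Finset Polynomial Real
open scoped Nat

/-- Chu–Vandermonde with the negative upper index `-(m+α+1)`, since
`C(-(r+1), k) = (-1)^k C(r+k, k)`. -/
theorem sum_neg_one_pow_mul_choose_mul_choose (j α m : ℕ) :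
    ∑ k ∈ range (j + 1), (-1 : ℤ) ^ k * ((j + α).choose (j - k)) * ((m + α + k).choose k) =
      (-1) ^ j * m.choose j := by
  have hV := Ring.add_choose_eq j (Commute.all (-((m + α + 1 : ℕ) : ℤ)) ((j + α : ℕ) : ℤ))
  rw [show -((m + α + 1 : ℕ) : ℤ) + ((j + α : ℕ) : ℤ) = -((m : ℤ) + 1 - j) by
      push_cast; ring,
    Ring.choose_neg, show (m : ℤ) + 1 - j + j - 1 = m by ring, Ring.choose_natCast,
    Finset.Nat.sum_antidiagonal_eq_sum_range_succ fun k i =>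
      Ring.choose (-((m + α + 1 : ℕ) : ℤ)) k * Ring.choose ((j + α : ℕ) : ℤ) i] at hV
  simp only [Ring.choose_neg, Ring.choose_natCast, Int.negOnePow_def, Units.smul_def,
    zpow_natCast, Units.val_pow_eq_pow_val, Units.val_neg, Units.val_one, smul_eq_mul] at hV
  rw [hV]
  refine sum_congr rfl fun k _ => ?_
  rw [show ((m + α + 1 : ℕ) : ℤ) + k - 1 = ((m + α + k : ℕ) : ℤ) by push_cast; ring,
    Ring.choose_natCast]
  ring

theorem integrableOn_pow_mul_exp_neg_mul_Ioi {b : ℝ} (hb : 0 < b) (n : ℕ) :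
    IntegrableOn (fun x : ℝ => x ^ n * exp (-b * x)) (Set.Ioi 0) := by
  refine (integrableOn_rpow_mul_exp_neg_mul_rpow (p := 1) (s := n)
    (neg_one_lt_zero.trans_le n.cast_nonneg) one_pos hb).congr_fun (fun x _ => ?_)
    measurableSet_Ioi
  simp only [rpow_one, rpow_natCast]

theorem integral_pow_mul_exp_neg_mul_Ioi {b : ℝ} (hb : 0 < b) (n : ℕ) :
    ∫ x in Set.Ioi 0, x ^ n * exp (-b * x) = n ! / b ^ (n + 1) := by
  have h := integral_rpow_mul_exp_neg_mul_Ioi (a := n + 1) (by positivity) hb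
  rw [add_sub_cancel_right, Gamma_nat_eq_factorial, ← Nat.cast_succ, rpow_natCast] at h
  simp only [rpow_natCast] at h
  simp only [neg_mul, h, one_div, inv_pow, Nat.succ_eq_add_one]
  ring

noncomputable def laplaceMoment (b : ℝ) : ℝ[X] →ₗ[ℝ] ℝ :=
  lsum fun n => LinearMap.mulLeft ℝ (n ! / b ^ (n + 1))

theorem laplaceMoment_monomial (b r : ℝ) (n : ℕ) :
    laplaceMoment b (monomial n r) = n ! / b ^ (n + 1) * r := by
  simp [laplaceMoment]

theorem integrableOn_eval_mul_exp_neg_mul_Ioi {b : ℝ} (hb : 0 < b) (R : ℝ[X]) :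
    IntegrableOn (fun x => R.eval x * exp (-b * x)) (Set.Ioi 0) := by
  induction R using Polynomial.induction_on' with
  | add R S hR hS => simpa only [eval_add, add_mul] using hR.fun_add hS
  | monomial n r =>
    simp only [eval_monomial, mul_assoc]
    exact (integrableOn_pow_mul_exp_neg_mul_Ioi hb n).const_mul r

theorem integral_eval_mul_exp_neg_mul_Ioi {b : ℝ} (hb : 0 < b) (R : ℝ[X]) :
    ∫ x in Set.Ioi 0, R.eval x * exp (-b * x) = laplaceMoment b R := by
  induction R using Polynomial.induction_on' with
  | add R S hR hS =>
    simp only [eval_add, add_mul, map_add]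
    rw [integral_add (integrableOn_eval_mul_exp_neg_mul_Ioi hb R)
      (integrableOn_eval_mul_exp_neg_mul_Ioi hb S), hR, hS]
  | monomial n r =>
    simp only [eval_monomial, mul_assoc, integral_const_mul, integral_pow_mul_exp_neg_mul_Ioi hb,
      laplaceMoment_monomial]
    ring

theorem laplaceMoment_C_mul_X_pow (b r : ℝ) (n : ℕ) :
    laplaceMoment b (C r * X ^ n) = r * n ! / b ^ (n + 1) := by
  rw [C_mul_X_pow_eq_monomial, laplaceMoment_monomial]
  ring

noncomputable def skewDensity (M N : ℕ) (f g : ℝ → ℝ) (x : ℝ) : ℝ :=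
  (f x * deriv g x - deriv f x * g x) * x ^ (2 * (M - N) + 1) * exp (-(2 * (M : ℝ)) * x)

theorem skewInner_eq_integral_skewDensity (M N : ℕ) (f g : ℝ → ℝ) :
    skewInner M N f g = ∫ x in Set.Ioi 0, skewDensity M N f g x := rfl

theorem skewInner_sub_right {M N : ℕ} {f g₁ g₂ : ℝ → ℝ} (hg₁ : Differentiable ℝ g₁)
    (hg₂ : Differentiable ℝ g₂) (h₁ : IntegrableOn (skewDensity M N f g₁) (Set.Ioi 0))
    (h₂ : IntegrableOn (skewDensity M N f g₂) (Set.Ioi 0)) :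
    skewInner M N f (fun x => g₁ x - g₂ x) = skewInner M N f g₁ - skewInner M N f g₂ := by
  have hdens : skewDensity M N f (fun x => g₁ x - g₂ x) =
      fun x => skewDensity M N f g₁ x - skewDensity M N f g₂ x := by
    ext x
    simp only [skewDensity, deriv_fun_sub (hg₁ x) (hg₂ x)]
    ring
  rw [skewInner_eq_integral_skewDensity, hdens, integral_sub h₁ h₂]
  rfl

noncomputable def skewPoly (α : ℕ) (t : ℝ) : ℝ[X] →ₗ[ℝ] ℝ[X] →ₗ[ℝ] ℝ[X] :=
  LinearMap.mk₂ ℝ (fun p q => (p * (derivative q + C t * q) - derivative p * q) * X ^ (α + 1))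
    (fun p₁ p₂ q => by simp only [map_add]; ring)
    (fun r p q => by simp only [smul_eq_C_mul, derivative_C_mul]; ring)
    (fun p q₁ q₂ => by simp only [map_add]; ring)
    (fun r p q => by simp only [smul_eq_C_mul, derivative_C_mul]; ring)

theorem skewPoly_X_pow_X_pow (α : ℕ) (t : ℝ) (m k : ℕ) :
    skewPoly α t (X ^ m) (X ^ k) =
      C ((k : ℝ) - m) * X ^ (m + k + α) + C t * X ^ (m + k + α + 1) := by
  simp only [skewPoly, LinearMap.mk₂_apply, derivative_X_pow]
  rcases m with _ | m <;> rcases k with _ | k <;>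
    simp only [C_0, C_add, C_sub, Nat.cast_add, Nat.cast_one, Nat.cast_zero, map_natCast,
      Nat.add_sub_cancel] <;> ring

theorem skewDensity_eval_mul_exp (M N : ℕ) (p q : ℝ[X]) (t : ℝ) :
    skewDensity M N (fun x => p.eval x) (fun x => q.eval x * exp (t * x)) =
      fun x => (skewPoly (2 * (M - N)) t p q).eval x * exp (-(2 * M - t) * x) := by
  ext x
  have hg : HasDerivAt (fun x => q.eval x * exp (t * x))
      (q.derivative.eval x * exp (t * x) + q.eval x * (exp (t * x) * (t * 1))) x :=
    (q.hasDerivAt x).mul ((hasDerivAt_id' x).const_mul t).exp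
  simp only [skewDensity, hg.deriv, Polynomial.deriv, skewPoly, LinearMap.mk₂_apply, eval_mul,
    eval_sub, eval_add, eval_C, eval_pow, eval_X]
  rw [show -(2 * (M : ℝ) - t) * x = t * x + -(2 * M) * x by ring, exp_add]
  ring

theorem integrableOn_skewDensity_eval_mul_exp {M : ℕ} (N : ℕ) (p q : ℝ[X]) {t : ℝ}
    (ht : t < 2 * M) :
    IntegrableOn (skewDensity M N (fun x => p.eval x) (fun x => q.eval x * exp (t * x)))
      (Set.Ioi 0) := by
  rw [skewDensity_eval_mul_exp]
  exact integrableOn_eval_mul_exp_neg_mul_Ioi (by linarith) _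

theorem skewInner_eval_mul_exp {M : ℕ} (N : ℕ) (p q : ℝ[X]) {t : ℝ} (ht : t < 2 * M) :
    skewInner M N (fun x => p.eval x) (fun x => q.eval x * exp (t * x)) =
      laplaceMoment (2 * M - t) (skewPoly (2 * (M - N)) t p q) := by
  rw [skewInner_eq_integral_skewDensity, skewDensity_eval_mul_exp]
  exact integral_eval_mul_exp_neg_mul_Ioi (by linarith) _

noncomputable def laguerreCoeff (n α k : ℕ) : ℝ := (-1) ^ k * (n + α).choose (n - k) / k !

/-- The moment `∫₀^∞ L_j^(α)(y) y^(m+α) e^(-y) dy`, integrated termwise. -/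
theorem sum_laguerreCoeff_mul_factorial (j α m : ℕ) :
    ∑ k ∈ range (j + 1), laguerreCoeff j α k * (m + α + k)! =
      (-1) ^ j * (m + α)! * m.choose j := by
  have hZ := congrArg (Int.cast : ℤ → ℝ) (sum_neg_one_pow_mul_choose_mul_choose j α m)
  push_cast at hZ
  calc ∑ k ∈ range (j + 1), laguerreCoeff j α k * (m + α + k)!
      = (m + α)! * ∑ k ∈ range (j + 1),
          (-1 : ℝ) ^ k * (j + α).choose (j - k) * (m + α + k).choose k := by
        rw [mul_sum]
        refine sum_congr rfl fun k _ => ?_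
        rw [laguerreCoeff, ← Nat.add_choose_mul_factorial_mul_factorial (m + α) k]
        push_cast
        field_simp
    _ = (-1) ^ j * (m + α)! * m.choose j := by rw [hZ]; ring

theorem sum_pow_mul_choose_of_lt (a : ℝ) {m n : ℕ} (h : m < n) :
    ∑ j ∈ range n, a ^ j * m.choose j = (1 + a) ^ m := by
  rw [add_comm, add_pow]
  simp only [one_pow, mul_one]
  refine (sum_subset (range_subset_range.mpr h) fun j _ hj => ?_).symm
  rw [Nat.choose_eq_zero_of_lt (by simpa using hj), Nat.cast_zero, mul_zero]

theorem sum_laguerre_moment (a : ℝ) (α : ℕ) {m n : ℕ} (h : m < n) :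
    ∑ j ∈ range n, (-a) ^ j * ∑ k ∈ range (j + 1), laguerreCoeff j α k * (m + α + k)! =
      (m + α)! * (1 + a) ^ m := by
  simp only [sum_laguerreCoeff_mul_factorial, ← sum_pow_mul_choose_of_lt a h, mul_sum]
  refine sum_congr rfl fun j _ => ?_
  have hsign : (-a) ^ j * (-1) ^ j = a ^ j := by rw [← mul_pow, neg_mul_neg, mul_one]
  linear_combination ((m + α)! * m.choose j : ℝ) * hsign

theorem sum_laguerre_skew_moment (a : ℝ) (α : ℕ) {m n : ℕ} (h : m + 1 < n) :
    ∑ j ∈ range n, (-a) ^ j *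
        ∑ k ∈ range (j + 1), laguerreCoeff j α k * (((k : ℝ) - m) * (m + α + k)!) =
      (m + α)! * (1 + a) ^ m * (a * (m + α + 1) - m) := by
  have hsplit : ∀ k : ℕ, ((k : ℝ) - m) * (m + α + k)! =
      (m + 1 + α + k)! - (2 * m + α + 1) * (m + α + k)! := by
    intro k
    rw [show m + 1 + α + k = m + α + k + 1 by ring, Nat.factorial_succ]
    push_cast
    ring
  simp only [hsplit, mul_sub, sum_sub_distrib, mul_left_comm _ ((2 * (m : ℝ) + α + 1)),
    ← mul_sum]
  rw [sum_laguerre_moment a α h, sum_laguerre_moment a α (m.lt_succ_self.trans h),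
    show m + 1 + α = m + α + 1 by ring, Nat.factorial_succ]
  push_cast
  ring

noncomputable def scaledLaguerre (n α : ℕ) (c : ℝ) : ℝ[X] :=
  ∑ k ∈ range (n + 1), (laguerreCoeff n α k * c ^ k) • X ^ k

theorem eval_scaledLaguerre (n α : ℕ) (c x : ℝ) :
    (scaledLaguerre n α c).eval x = genLaguerre n α (c * x) := by
  simp only [scaledLaguerre, genLaguerre, laguerreCoeff, eval_finsetSum, eval_smul, eval_pow,
    eval_X, smul_eq_mul]
  refine sum_congr rfl fun k _ => ?_
  ring

theorem laplaceMoment_skewPoly_X_pow_one (α m : ℕ) (t b : ℝ) :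
    laplaceMoment b (skewPoly α t (X ^ m) 1) =
      t * (m + α + 1)! / b ^ (m + α + 2) - m * (m + α)! / b ^ (m + α + 1) := by
  rw [← pow_zero X, skewPoly_X_pow_X_pow, map_add, laplaceMoment_C_mul_X_pow,
    laplaceMoment_C_mul_X_pow]
  simp only [add_zero, Nat.cast_zero, zero_sub]
  ring

theorem laplaceMoment_skewPoly_X_pow_scaledLaguerre {c : ℝ} (hc : c ≠ 0) (α j m : ℕ) :
    laplaceMoment c (skewPoly α 0 (X ^ m) (scaledLaguerre j α c)) =
      (∑ k ∈ range (j + 1), laguerreCoeff j α k * (((k : ℝ) - m) * (m + α + k)!)) /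
        c ^ (m + α + 1) := by
  simp only [scaledLaguerre, map_sum, map_smul, skewPoly_X_pow_X_pow, C_0, zero_mul, add_zero,
    laplaceMoment_C_mul_X_pow, smul_eq_mul, sum_div]
  refine sum_congr rfl fun k _ => ?_
  rw [show m + k + α = m + α + k by ring, pow_add c (m + α + k) 1, pow_add c (m + α) k]
  field_simp
  ring

theorem laplaceMoment_skewPoly_X_pow_exp_eq {c a : ℝ} (hc : c ≠ 0) (ha : 1 + a ≠ 0) (α : ℕ)
    {m n : ℕ} (hm : m < n) :
    laplaceMoment (c - a / (1 + a) * c) (skewPoly α (a / (1 + a) * c) (X ^ m) 1) =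
      laplaceMoment c (skewPoly α 0 (X ^ m)
        ((1 + a) ^ (α + 1) • ∑ j ∈ range (n + 1), (-a) ^ j • scaledLaguerre j α c)) := by
  simp only [map_smul, map_sum, laplaceMoment_skewPoly_X_pow_scaledLaguerre hc, smul_eq_mul,
    mul_div_assoc', ← sum_div, sum_laguerre_skew_moment a α (Nat.succ_lt_succ hm),
    laplaceMoment_skewPoly_X_pow_one]
  rw [show c - a / (1 + a) * c = c / (1 + a) by field_simp; ring, Nat.factorial_succ, div_pow,
    div_pow, pow_succ (1 + a) (m + α + 1), pow_succ c (m + α + 1),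
    show (1 + a) ^ (m + α + 1) = (1 + a) ^ m * (1 + a) ^ (α + 1) by ring]
  push_cast
  field_simp

theorem laplaceMoment_skewPoly_exp_eq {c a : ℝ} (hc : c ≠ 0) (ha : 1 + a ≠ 0) (α n : ℕ)
    {p : ℝ[X]} (hp : p.degree < n) :
    laplaceMoment (c - a / (1 + a) * c) (skewPoly α (a / (1 + a) * c) p 1) =
      laplaceMoment c (skewPoly α 0 p
        ((1 + a) ^ (α + 1) • ∑ j ∈ range (n + 1), (-a) ^ j • scaledLaguerre j α c)) := by
  classical
  let Φ : ℝ[X] →ₗ[ℝ] ℝ :=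
    laplaceMoment (c - a / (1 + a) * c) ∘ₗ (skewPoly α (a / (1 + a) * c)).flip 1 -
      laplaceMoment c ∘ₗ (skewPoly α 0).flip
        ((1 + a) ^ (α + 1) • ∑ j ∈ range (n + 1), (-a) ^ j • scaledLaguerre j α c)
  suffices p ∈ LinearMap.ker Φ by simpa [Φ, sub_eq_zero] using this
  rw [← mem_degreeLT, degreeLT_eq_span_X_pow] at hp
  refine Submodule.span_le.mpr ?_ hp
  simp only [coe_image, coe_range, Set.image_subset_iff]
  intro m hm
  simp [Φ, laplaceMoment_skewPoly_X_pow_exp_eq hc ha α hm]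

/-- The function `φ_{2N-1}(x) = e^{(a/(1+a))2Mx}
  - (1+a)^{2(M-N)+1} ∑_{j=0}^{2N-2} (-a)^j L_j^{(2(M-N))}(2Mx)`
is skew-orthogonal to every polynomial of degree at most `2N-3`
(i.e. of degree `< 2N-2`). -/
theorem stmt_16 (M N : ℕ) (hN : 1 ≤ N) (hMN : N ≤ M) (a : ℝ) (ha : -1 < a)
    (p : Polynomial ℝ) (hp : p.degree < ((2 * N - 2 : ℕ) : WithBot ℕ)) :
    skewInner M N (fun x => p.eval x)
      (fun x =>
        Real.exp (a / (1 + a) * (2 * (M : ℝ) * x)) -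
          (1 + a) ^ (2 * (M - N) + 1) *
            ∑ j ∈ Finset.range (2 * N - 1),
              (-a) ^ j * genLaguerre j (2 * (M - N)) (2 * (M : ℝ) * x)) = 0 := by
  have hc : (0 : ℝ) < 2 * M := by
    have : (1 : ℝ) ≤ M := by exact_mod_cast hN.trans hMN
    linarith
  have h1a : 0 < 1 + a := by linarith
  have ht : a / (1 + a) * (2 * M) < 2 * M := by
    have : 2 * M - a / (1 + a) * (2 * M) = 2 * M / (1 + a) := by field_simp; ring
    linarith [div_pos hc h1a]
  set lag := (1 + a) ^ (2 * (M - N) + 1) •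
    ∑ j ∈ range (2 * N - 2 + 1), (-a) ^ j • scaledLaguerre j (2 * (M - N)) (2 * M)
  have hφ : (fun x => exp (a / (1 + a) * (2 * (M : ℝ) * x)) - (1 + a) ^ (2 * (M - N) + 1) *
      ∑ j ∈ range (2 * N - 1), (-a) ^ j * genLaguerre j (2 * (M - N)) (2 * (M : ℝ) * x)) =
      fun x => (1 : ℝ[X]).eval x * exp (a / (1 + a) * (2 * M) * x) -
        lag.eval x * exp (0 * x) := by
    ext x
    simp only [lag, eval_one, eval_smul, eval_finsetSum, eval_scaledLaguerre, smul_eq_mul,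
      zero_mul, exp_zero, mul_one, one_mul, mul_assoc,
      show 2 * N - 2 + 1 = 2 * N - 1 by omega]
  rw [hφ, skewInner_sub_right (by fun_prop) (by fun_prop)
    (integrableOn_skewDensity_eval_mul_exp N p 1 ht)
    (integrableOn_skewDensity_eval_mul_exp N p lag hc), skewInner_eval_mul_exp N p 1 ht,
    skewInner_eval_mul_exp N p lag hc, sub_zero, sub_eq_zero]
  exact laplaceMoment_skewPoly_exp_eq hc.ne' h1a.ne' _ _ hp
end
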